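/- Let Δ and Γ be simplicial complexes, and let 𝒞 = C_1 ⊔ ⋯ ⊔ C_k and 𝒟 = D_1 ⊔ ⋯ ⊔ D_k be nested k-colourings of Δ and Γ, each endowed with a nesting order. If Σ is the simplicial complex with ordered proper vertex k-colouring ℰ satisfying I(Δ, 𝒞) · I(Γ, 𝒟) = I(Σ, ℰ), then ℰ is a nested colouring of Σ endowed with the nesting order; equivalently, the product ideal I(Δ, 𝒞) · I(Γ, 𝒟) is Q_k-Borel. -/

import Mathlib

open MvPolynomial

/-- A simplicial complex on a vertex type `V`: a collection of finite subsets (faces)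
containing the empty set and closed under taking subsets. -/
structure SimpComplex (V : Type) where
  faces : Set (Finset V)
  empty_mem : ∅ ∈ faces
  down_closed : ∀ {σ τ : Finset V}, σ ∈ faces → τ ⊆ σ → τ ∈ faces

namespace SimpComplex

variable {V : Type}

/-- `A` is an independent set of `Δ`: no two distinct members lie in a common face. -/
def IsIndep (Δ : SimpComplex V) (A : Set V) : Prop :=
  ∀ u ∈ A, ∀ v ∈ A, u ≠ v → ∀ σ ∈ Δ.faces, ¬(u ∈ σ ∧ v ∈ σ)

/-- The link of a vertex `v` in `Δ`. -/
def link [DecidableEq V] (Δ : SimpComplex V) (v : V) : Set (Finset V) :=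
  {τ | τ ∈ Δ.faces ∧ v ∉ τ ∧ insert v τ ∈ Δ.faces}

end SimpComplex

/-- A family of finsets indexed by `Fin k` is a partition of the vertex set. -/
def IsPartition {V : Type} {k : ℕ} (C : Fin k → Finset V) : Prop :=
  ∀ v : V, ∃! i, v ∈ C i

/-- A proper vertex `k`-colouring of a simplicial complex: a partition into independent sets. -/
def IsProperColouring {V : Type} {k : ℕ} (Δ : SimpComplex V) (C : Fin k → Finset V) : Prop :=
  IsPartition C ∧ ∀ i, Δ.IsIndep (C i : Set V)

/-- An ordered proper vertex `k`-colouring, given by a duplicate-free list (recording the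
linear order) for each colour class; the classes partition the vertices and are independent. -/
def IsOrderedColouring {V : Type} {k : ℕ} (Δ : SimpComplex V) (C : Fin k → List V) : Prop :=
  (∀ i, (C i).Nodup) ∧ (∀ v : V, ∃! i, v ∈ C i) ∧ (∀ i, Δ.IsIndep {v | v ∈ C i})

/-- The given linear orders on the colour classes are nesting orders: within a class,
if `v` comes before `u` then `link(u) ⊆ link(v)`.  (Thus the colouring is nested and is
endowed with the nesting order.) -/
def IsNestingOrdered {V : Type} [DecidableEq V] {k : ℕ} (Δ : SimpComplex V)
    (C : Fin k → List V) : Prop :=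
  ∀ i, (C i).Pairwise (fun v u => Δ.link u ⊆ Δ.link v)

/-- The index vector of a set `σ` with respect to the ordered colouring `C`:
`eVec C σ i = j` iff the (unique) element of `σ ∩ C i` is the `j`-th element of the list
`C i` (counting from 1), and `0` if `σ ∩ C i = ∅`. -/
def eVec {V : Type} [DecidableEq V] {k : ℕ} (C : Fin k → List V) (σ : Finset V)
    (i : Fin k) : ℕ :=
  if (C i).any (fun v => decide (v ∈ σ)) then
    (C i).findIdx (fun v => decide (v ∈ σ)) + 1
  else 0

/-- The uniform monomial of a face `σ`:  `∏ i, x_i ^ (#C_i - e_i(σ)) * y_i ^ (e_i(σ))`,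
where `x_i = X (Sum.inl i)` and `y_i = X (Sum.inr i)`. -/
noncomputable def uniformMonomial (K : Type) [Field K] {V : Type} [DecidableEq V] {k : ℕ}
    (C : Fin k → List V) (σ : Finset V) : MvPolynomial (Fin k ⊕ Fin k) K :=
  ∏ i : Fin k, (X (Sum.inl i) ^ ((C i).length - eVec C σ i) * X (Sum.inr i) ^ eVec C σ i)

/-- The uniform face ideal of `Δ` with respect to the ordered colouring `C`. -/
noncomputable def uniformFaceIdeal (K : Type) [Field K] {V : Type} [DecidableEq V] {k : ℕ}
    (Δ : SimpComplex V) (C : Fin k → List V) : Ideal (MvPolynomial (Fin k ⊕ Fin k) K) :=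
  Ideal.span {m | ∃ σ ∈ Δ.faces, m = uniformMonomial K C σ}

/-- A monomial ideal of `K[x_1,…,x_k,y_1,…,y_k]` is `Q_k`-Borel, where `Q_k` is the poset on
the variables whose only relations are `x_i < y_i`:  for every monomial `m ∈ I` with
`y_i ∣ m`, the monomial `x_i·m/y_i` lies in `I`. -/
def IsQkBorel {k : ℕ} {K : Type} [Field K]
    (I : Ideal (MvPolynomial (Fin k ⊕ Fin k) K)) : Prop :=
  ∀ a : (Fin k ⊕ Fin k) →₀ ℕ, MvPolynomial.monomial a (1 : K) ∈ I →
    ∀ i : Fin k, a (Sum.inr i) ≠ 0 →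
      MvPolynomial.monomial
        (a - Finsupp.single (Sum.inr i) 1 + Finsupp.single (Sum.inl i) 1) (1 : K) ∈ I

/-!
Write `e(σ)` for the index vector of a face. In a nesting order the `(j+1)`-st vertex of a colour
class can be replaced in a face by the `j`-th one (or removed when `j = 0`); on uniform monomials
this is exactly the move `m ↦ x_i·m/y_i`, so `I(Δ,𝒞)` and `I(Γ,𝒟)` are `Q_k`-Borel. So is their
product: the move applied to `m_σ m_τ` either applies to a factor divisible by `y_i` or keeps
`m_σ m_τ` as a divisor.

Conversely, let `I(Σ,ℰ)` be `Q_k`-Borel, `v` directly precede `u` in a colour class and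
`τ ∈ link u`. The move applied to `m_{τ ∪ u}` gives a multiple of some `m_ρ`; as every uniform
monomial has degree `#C_i` in `x_i, y_i`, the divisibility is an equality, so `e(ρ)` is `e(τ ∪ u)`
with `u` replaced by `v`, i.e. `τ ∪ v ⊆ ρ` is a face.
-/

namespace MvPolynomial

variable {σ R : Type*} [CommSemiring R]

theorem monomial_one_mem_span_monomial_image_iff [Nontrivial R] {s : Set (σ →₀ ℕ)}
    {a : σ →₀ ℕ} :
    monomial a (1 : R) ∈ Ideal.span ((fun p => monomial p (1 : R)) '' s) ↔ ∃ p ∈ s, p ≤ a := by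
  classical
  simp [mem_ideal_span_monomial_image, support_monomial]

theorem monomial_one_mem_of_le {I : Ideal (MvPolynomial σ R)} {p a : σ →₀ ℕ}
    (hp : monomial p (1 : R) ∈ I) (h : p ≤ a) : monomial a (1 : R) ∈ I := by
  rw [← tsub_add_cancel_of_le h, ← one_mul (1 : R), ← monomial_mul]
  exact I.mul_mem_left _ hp

theorem span_monomial_image_mul_span_monomial_image (s t : Set (σ →₀ ℕ)) :
    Ideal.span ((fun p => monomial p (1 : R)) '' s) *
        Ideal.span ((fun p => monomial p (1 : R)) '' t) =
      Ideal.span ((fun p => monomial p (1 : R)) '' (Set.image2 (· + ·) s t)) := by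
  rw [Ideal.span_mul_span', ← Set.image2_mul, Set.image_image2]
  simp only [Set.image2_image_left, Set.image2_image_right, monomial_mul, mul_one]

end MvPolynomial

section QkBorel

variable {ι : Type*}

/-- The exponent of `x_i·m/y_i` for the monomial `m` with exponent `a`. -/
noncomputable def qShift (a : ι ⊕ ι →₀ ℕ) (i : ι) : ι ⊕ ι →₀ ℕ :=
  a - Finsupp.single (Sum.inr i) 1 + Finsupp.single (Sum.inl i) 1

theorem qShift_mono {a b : ι ⊕ ι →₀ ℕ} (h : a ≤ b) (i : ι) : qShift a i ≤ qShift b i := by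
  unfold qShift
  gcongr

theorem qShift_add {p : ι ⊕ ι →₀ ℕ} {i : ι} (hp : p (Sum.inr i) ≠ 0) (q : ι ⊕ ι →₀ ℕ) :
    qShift p i + q = qShift (p + q) i := by
  have : Finsupp.single (Sum.inr i) 1 ≤ p := by
    simpa [Finsupp.single_le_iff, Nat.one_le_iff_ne_zero] using hp
  rw [qShift, qShift, add_right_comm, tsub_add_eq_add_tsub this]

theorem le_qShift_of_le {b a : ι ⊕ ι →₀ ℕ} {i : ι} (h : b ≤ a) (hb : b (Sum.inr i) = 0) :
    b ≤ qShift a i := by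
  refine le_add_right (Finsupp.le_def.2 fun s => ?_)
  have := Finsupp.le_def.1 h s
  rcases eq_or_ne s (Sum.inr i) with rfl | hs
  · simp [hb]
  · simpa [Finsupp.single_apply, Ne.symm hs] using this

end QkBorel

theorem IsQkBorel.mul {k : ℕ} {K : Type} [Field K] {s t : Set ((Fin k ⊕ Fin k) →₀ ℕ)}
    (hs : IsQkBorel (Ideal.span ((fun p => monomial p (1 : K)) '' s)))
    (ht : IsQkBorel (Ideal.span ((fun p => monomial p (1 : K)) '' t))) :
    IsQkBorel (Ideal.span ((fun p => monomial p (1 : K)) '' s) *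
      Ideal.span ((fun p => monomial p (1 : K)) '' t)) := by
  set I := Ideal.span ((fun p => monomial p (1 : K)) '' s)
  set J := Ideal.span ((fun p => monomial p (1 : K)) '' t)
  have hmul : ∀ {p q b}, monomial p (1 : K) ∈ I → monomial q (1 : K) ∈ J → p + q ≤ b →
      monomial b (1 : K) ∈ I * J := fun hp hq h =>
    monomial_one_mem_of_le (by simpa [monomial_mul] using Ideal.mul_mem_mul hp hq) h
  intro a ha i _
  change monomial (qShift a i) 1 ∈ I * J
  rw [span_monomial_image_mul_span_monomial_image,
    monomial_one_mem_span_monomial_image_iff] at ha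
  obtain ⟨_, ⟨p, hp, q, hq, rfl⟩, hpq⟩ := ha
  have hpI : monomial p (1 : K) ∈ I := Ideal.subset_span ⟨p, hp, rfl⟩
  have hqJ : monomial q (1 : K) ∈ J := Ideal.subset_span ⟨q, hq, rfl⟩
  by_cases hpi : p (Sum.inr i) = 0
  · by_cases hqi : q (Sum.inr i) = 0
    · exact hmul hpI hqJ (le_qShift_of_le hpq (by simp [hpi, hqi]))
    · have hqJ' : monomial (qShift q i) (1 : K) ∈ J := ht q hqJ i hqi
      refine hmul hpI hqJ' ?_
      rw [add_comm, qShift_add hqi, add_comm]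
      exact qShift_mono hpq i
  · have hpI' : monomial (qShift p i) (1 : K) ∈ I := hs p hpI i hpi
    refine hmul hpI' hqJ ?_
    rw [qShift_add hpi]
    exact qShift_mono hpq i

section UniformExponent

variable {ι : Type*} [Finite ι] {L e e' : ι → ℕ}

/-- The exponent of `∏ i, x_i ^ (L i - e i) * y_i ^ e i`. -/
noncomputable def uniformExponent (L e : ι → ℕ) : ι ⊕ ι →₀ ℕ :=
  Finsupp.equivFunOnFinite.symm (Sum.elim (fun i => L i - e i) e)

@[simp]
theorem uniformExponent_inl (i : ι) : uniformExponent L e (Sum.inl i) = L i - e i := rfl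

@[simp]
theorem uniformExponent_inr (i : ι) : uniformExponent L e (Sum.inr i) = e i := rfl

theorem qShift_uniformExponent [DecidableEq ι] {i : ι} {j : ℕ} (he : e i = j + 1)
    (hL : e i ≤ L i) :
    qShift (uniformExponent L e) i = uniformExponent L (Function.update e i j) := by
  ext (i' | i') <;> rcases eq_or_ne i' i with rfl | h
  · simp [qShift]
    omega
  · simp [qShift, h]
  · simp [qShift, he]
  · simp [qShift, h]

theorem eq_of_uniformExponent_le (he' : e' ≤ L)
    (h : uniformExponent L e ≤ uniformExponent L e') : e = e' := by
  funext i
  have hl := Finsupp.le_def.1 h (Sum.inl i)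
  have hr := Finsupp.le_def.1 h (Sum.inr i)
  simp only [uniformExponent_inl, uniformExponent_inr] at hl hr
  have : e' i ≤ L i := he' i
  omega

end UniformExponent

theorem SimpComplex.IsIndep.eq_of_mem_face {V : Type} {Δ : SimpComplex V} {A : Set V}
    (hA : Δ.IsIndep A) {σ : Finset V} (hσ : σ ∈ Δ.faces) {u v : V} (hu : u ∈ A) (hv : v ∈ A)
    (huσ : u ∈ σ) (hvσ : v ∈ σ) : u = v :=
  by_contra fun h => hA u hu v hv h σ hσ ⟨huσ, hvσ⟩

section eVec

variable {V : Type} [DecidableEq V] {k : ℕ} {C : Fin k → List V} {σ τ : Finset V} {i : Fin k}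

theorem eVec_le_length (C : Fin k → List V) (σ : Finset V) (i : Fin k) :
    eVec C σ i ≤ (C i).length := by
  unfold eVec
  split_ifs with h
  · have := List.findIdx_lt_length_of_exists (List.any_eq_true.1 h)
    omega
  · exact Nat.zero_le _

theorem eVec_congr (h : ∀ v ∈ C i, v ∈ σ ↔ v ∈ τ) : eVec C σ i = eVec C τ i := by
  have hmap : (C i).map (fun v => decide (v ∈ σ)) = (C i).map (fun v => decide (v ∈ τ)) :=
    List.map_congr_left fun v hv => decide_eq_decide.2 (h v hv)
  have hfind := congrArg (List.findIdx id) hmap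
  have hany := congrArg (List.any · id) hmap
  simp only [List.findIdx_map, List.any_map, Function.id_comp] at hfind hany
  rw [eVec, eVec, hfind, hany]

theorem eVec_eq_zero (h : ∀ v ∈ C i, v ∉ σ) : eVec C σ i = 0 := by
  rw [eVec, if_neg]
  simpa using h

end eVec

namespace IsOrderedColouring

variable {V : Type} [DecidableEq V] {k : ℕ} {Δ : SimpComplex V} {C : Fin k → List V}
  {σ ρ : Finset V} {i : Fin k} {j : ℕ}

theorem getElem_mem_iff_eVec_eq (hC : IsOrderedColouring Δ C) (hσ : σ ∈ Δ.faces)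
    (hj : j < (C i).length) : (C i)[j] ∈ σ ↔ eVec C σ i = j + 1 := by
  unfold eVec
  constructor
  · intro hmem
    rw [if_pos (List.any_eq_true.2 ⟨_, List.getElem_mem hj, decide_eq_true hmem⟩),
      Nat.add_right_cancel_iff, List.findIdx_eq hj]
    refine ⟨decide_eq_true hmem, fun j' hj' => decide_eq_false fun hmem' => ?_⟩
    have := (hC.1 i).getElem_inj_iff.1 <| (hC.2.2 i).eq_of_mem_face hσ
      (List.getElem_mem _) (List.getElem_mem hj) hmem' hmem
    omega
  · intro h
    split_ifs at h
    simpa using ((List.findIdx_eq (p := fun v => decide (v ∈ σ)) hj).1 (by omega)).1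

theorem mem_of_eVec_eq (hC : IsOrderedColouring Δ C) (hσ : σ ∈ Δ.faces) (hρ : ρ ∈ Δ.faces)
    {v : V} (hvσ : v ∈ σ) (hv : v ∈ C i) (h : eVec C ρ i = eVec C σ i) : v ∈ ρ := by
  obtain ⟨j, hj, rfl⟩ := List.getElem_of_mem hv
  rw [hC.getElem_mem_iff_eVec_eq hρ hj, h, ← hC.getElem_mem_iff_eVec_eq hσ hj]
  exact hvσ

theorem exists_face_eVec_eq_update (hC : IsOrderedColouring Δ C) (hCn : IsNestingOrdered Δ C)
    (hσ : σ ∈ Δ.faces) (h : eVec C σ i = j + 1) :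
    ∃ σ' ∈ Δ.faces, eVec C σ' = Function.update (eVec C σ) i j := by
  have hj : j < (C i).length := by
    have := eVec_le_length C σ i
    omega
  have hv : (C i)[j] ∈ σ := (hC.getElem_mem_iff_eVec_eq hσ hj).2 h
  suffices ∃ σ' ∈ Δ.faces, eVec C σ' i = j ∧ ∀ w ∉ C i, (w ∈ σ' ↔ w ∈ σ) by
    obtain ⟨σ', hσ', hi, hout⟩ := this
    refine ⟨σ', hσ', funext fun i' => ?_⟩
    rcases eq_or_ne i' i with rfl | hi'
    · simpa using hi
    · rw [Function.update_of_ne hi']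
      exact eVec_congr fun w hw => hout w fun hwi => hi' ((hC.2.1 w).unique hw hwi)
  have herase : σ.erase (C i)[j] ∈ Δ.faces := Δ.down_closed hσ (σ.erase_subset _)
  have hne : ∀ {u w : V}, u ∈ C i → w ∉ C i → w ≠ u := fun hu hw h => hw (h ▸ hu)
  cases j with
  | zero =>
    refine ⟨_, herase, eVec_eq_zero fun w hw hwσ => ?_, fun w hw => ?_⟩
    · exact (Finset.mem_erase.1 hwσ).1 <| (hC.2.2 i).eq_of_mem_face hσ hw
        (List.getElem_mem hj) (Finset.mem_of_mem_erase hwσ) hv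
    · simp [hne (List.getElem_mem hj) hw]
  | succ j =>
    have hlink : Δ.link (C i)[j + 1] ⊆ Δ.link (C i)[j] :=
      List.pairwise_iff_getElem.1 (hCn i) j (j + 1) _ hj (lt_add_one j)
    obtain ⟨-, -, hface⟩ :=
      hlink ⟨herase, σ.notMem_erase _, by rwa [Finset.insert_erase hv]⟩
    refine ⟨_, hface, ((hC.getElem_mem_iff_eVec_eq hface _).1 (Finset.mem_insert_self _ _)),
      fun w hw => ?_⟩
    simp [hne (List.getElem_mem hj) hw, hne (List.getElem_mem (j.lt_succ_self.trans hj)) hw]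

end IsOrderedColouring

section UniformFaceIdeal

variable (K : Type) [Field K] {V : Type} [DecidableEq V] {k : ℕ}

noncomputable def faceExponent (C : Fin k → List V) (σ : Finset V) : (Fin k ⊕ Fin k) →₀ ℕ :=
  uniformExponent (fun i => (C i).length) (eVec C σ)

theorem uniformMonomial_eq_monomial (C : Fin k → List V) (σ : Finset V) :
    uniformMonomial K C σ = monomial (faceExponent C σ) 1 := by
  rw [monomial_eq, MvPolynomial.C_1, one_mul, Finsupp.prod_fintype _ _ fun _ => pow_zero _,
    Fintype.prod_sum_type, ← Finset.prod_mul_distrib]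
  rfl

theorem uniformFaceIdeal_eq_span (Δ : SimpComplex V) (C : Fin k → List V) :
    uniformFaceIdeal K Δ C =
      Ideal.span ((fun p => monomial p (1 : K)) '' (faceExponent C '' Δ.faces)) := by
  rw [uniformFaceIdeal, Set.image_image]
  congr 1
  ext m
  simp [uniformMonomial_eq_monomial, eq_comm]

variable {K} {Δ : SimpComplex V} {C : Fin k → List V}

theorem monomial_faceExponent_mem_uniformFaceIdeal {σ : Finset V} (hσ : σ ∈ Δ.faces) :
    monomial (faceExponent C σ) (1 : K) ∈ uniformFaceIdeal K Δ C :=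
  Ideal.subset_span ⟨σ, hσ, (uniformMonomial_eq_monomial K C σ).symm⟩

theorem monomial_mem_uniformFaceIdeal_iff {a : (Fin k ⊕ Fin k) →₀ ℕ} :
    monomial a (1 : K) ∈ uniformFaceIdeal K Δ C ↔ ∃ σ ∈ Δ.faces, faceExponent C σ ≤ a := by
  simp [uniformFaceIdeal_eq_span, monomial_one_mem_span_monomial_image_iff]

theorem IsNestingOrdered.isQkBorel_uniformFaceIdeal (hC : IsOrderedColouring Δ C)
    (hCn : IsNestingOrdered Δ C) : IsQkBorel (uniformFaceIdeal K Δ C) := by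
  intro a ha i _
  change monomial (qShift a i) 1 ∈ _
  obtain ⟨σ, hσ, hσa⟩ := monomial_mem_uniformFaceIdeal_iff.1 ha
  obtain h | ⟨j, h⟩ : eVec C σ i = 0 ∨ ∃ j, eVec C σ i = j + 1 := by
    cases eVec C σ i <;> simp
  · exact monomial_one_mem_of_le (monomial_faceExponent_mem_uniformFaceIdeal hσ)
      (le_qShift_of_le hσa h)
  · obtain ⟨σ', hσ', he⟩ := hC.exists_face_eVec_eq_update hCn hσ h
    refine monomial_one_mem_of_le (monomial_faceExponent_mem_uniformFaceIdeal hσ') ?_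
    calc faceExponent C σ' = qShift (faceExponent C σ) i := by
          rw [faceExponent, faceExponent, he, qShift_uniformExponent h (eVec_le_length C σ i)]
      _ ≤ qShift a i := qShift_mono hσa i

theorem IsNestingOrdered.isQkBorel_uniformFaceIdeal_mul {W : Type} [DecidableEq W]
    {Γ : SimpComplex W} {D : Fin k → List W} (hC : IsOrderedColouring Δ C)
    (hCn : IsNestingOrdered Δ C) (hD : IsOrderedColouring Γ D) (hDn : IsNestingOrdered Γ D) :
    IsQkBorel (uniformFaceIdeal K Δ C * uniformFaceIdeal K Γ D) := by
  have hΔ := hCn.isQkBorel_uniformFaceIdeal (K := K) hC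
  have hΓ := hDn.isQkBorel_uniformFaceIdeal (K := K) hD
  simp only [uniformFaceIdeal_eq_span] at hΔ hΓ ⊢
  exact hΔ.mul hΓ

theorem IsOrderedColouring.isNestingOrdered_of_isQkBorel (hC : IsOrderedColouring Δ C)
    (hB : IsQkBorel (uniformFaceIdeal K Δ C)) : IsNestingOrdered Δ C := by
  intro i
  let _ : Trans (fun v u => Δ.link u ⊆ Δ.link v) (fun v u => Δ.link u ⊆ Δ.link v)
      (fun v u => Δ.link u ⊆ Δ.link v) := ⟨fun h₁ h₂ => h₂.trans h₁⟩
  refine List.IsChain.pairwise (List.isChain_iff_getElem.2 fun j hj => ?_)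
  rintro τ ⟨hτ, huτ, hσ⟩
  set σ := insert (C i)[j + 1] τ
  have hσi : eVec C σ i = j + 1 + 1 :=
    (hC.getElem_mem_iff_eVec_eq hσ hj).1 (Finset.mem_insert_self _ _)
  have hshift : monomial (qShift (faceExponent C σ) i) (1 : K) ∈ uniformFaceIdeal K Δ C :=
    hB _ (monomial_faceExponent_mem_uniformFaceIdeal hσ) i (by simp [faceExponent, hσi])
  obtain ⟨ρ, hρ, hρσ⟩ := monomial_mem_uniformFaceIdeal_iff.1 hshift
  rw [faceExponent, faceExponent, qShift_uniformExponent hσi (eVec_le_length C σ i)] at hρσ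
  have hρe : eVec C ρ = Function.update (eVec C σ) i (j + 1) := by
    refine eq_of_uniformExponent_le (fun i' => ?_) hρσ
    rcases eq_or_ne i' i with rfl | hi'
    · simpa using hj.le
    · simpa [hi'] using eVec_le_length C σ i'
  have hvρ : (C i)[j] ∈ ρ := (hC.getElem_mem_iff_eVec_eq hρ _).2 (by simp [hρe])
  have hτρ : τ ⊆ ρ := fun w hw => by
    obtain ⟨i', hi', -⟩ := hC.2.1 w
    have hwσ : w ∈ σ := Finset.mem_insert_of_mem hw
    refine hC.mem_of_eVec_eq hσ hρ hwσ hi' ?_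
    rw [hρe, Function.update_of_ne]
    rintro rfl
    exact huτ ((hC.2.2 i').eq_of_mem_face hσ hi' (List.getElem_mem _) hwσ
      (Finset.mem_insert_self _ _) ▸ hw)
  have hvτ : (C i)[j] ∉ τ := fun hvτ => by
    have := (hC.getElem_mem_iff_eVec_eq hσ _).1 (Finset.mem_insert_of_mem hvτ)
    omega
  exact ⟨hτ, hvτ, Δ.down_closed hρ (Finset.insert_subset hvρ hτρ)⟩

end UniformFaceIdeal

/-- Corollary 5.3: if `𝒞` and `𝒟` are nested `k`-colourings of `Δ` and `Γ`
endowed with nesting orders, and `I(Δ,𝒞)·I(Γ,𝒟) = I(S,ℰ)` for a simplicial complex `S` with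
ordered proper vertex `k`-colouring `ℰ`, then `ℰ` is nested and endowed with the nesting
order; equivalently, the product ideal is `Q_k`-Borel. -/
theorem stmt8 {n m N k : ℕ} (K : Type) [Field K]
    (Δ : SimpComplex (Fin n)) (Γ : SimpComplex (Fin m)) (S : SimpComplex (Fin N))
    (C : Fin k → List (Fin n)) (D : Fin k → List (Fin m)) (E : Fin k → List (Fin N))
    (hC : IsOrderedColouring Δ C) (hD : IsOrderedColouring Γ D)
    (hCn : IsNestingOrdered Δ C) (hDn : IsNestingOrdered Γ D)
    (hE : IsOrderedColouring S E)
    (hprod : uniformFaceIdeal K Δ C * uniformFaceIdeal K Γ D = uniformFaceIdeal K S E) :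
    IsNestingOrdered S E ∧
    IsQkBorel (uniformFaceIdeal K Δ C * uniformFaceIdeal K Γ D) := by
  have hB := hCn.isQkBorel_uniformFaceIdeal_mul (K := K) hC hD hDn
  exact ⟨hE.isNestingOrdered_of_isQkBorel (hprod ▸ hB), hB⟩
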